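/- Let 𝔄 be an invertible 2p×2p complex matrix with p×p blocks 𝔄_{ij} (i,j ∈ {1,2}) such that ρ₊ := 𝔄_{21}𝔄_{22}* + 𝔄_{22}𝔄_{21}* is positive definite, and such that, setting ℵ := (𝔄^{−1})*J𝔄^{−1} with p×p blocks ℵ_{ij}, the block ℵ_{11} is negative definite. Then for a p×p complex matrix φ the following are equivalent: (i) there exists a nonsingular pair (R, Q) with property-J such that F := 𝔄_{21}R + 𝔄_{22}Q is invertible and φ = i(𝔄_{11}R + 𝔄_{12}Q)F^{−1}; (ii) there exists a p×p matrix u with u*u ≤ I_p such that φ = i(−ℵ_{11})^{−1}ℵ_{12} − (−ℵ_{11})^{−1/2} u ρ₊^{−1/2}. In other words, the values of the linear-fractional transformations generated by 𝔄 and property-J pairs form exactly the matrix ball with centre i(−ℵ_{11})^{−1}ℵ_{12}, left radius (−ℵ_{11})^{−1/2} and right radius ρ₊^{−1/2}. -/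

import Mathlib

open Matrix
open scoped ComplexOrder

noncomputable section

/-- `X^{-1/2}` for a positive semidefinite matrix `X` (junk value `0` otherwise). -/
def invSqrt {p : ℕ} (X : Matrix (Fin p) (Fin p) ℂ) : Matrix (Fin p) (Fin p) ℂ :=
  open scoped Classical in
  if h : X.PosSemidef then
    ((h.1.eigenvectorUnitary : Matrix (Fin p) (Fin p) ℂ) *
      diagonal ((↑) ∘ Real.sqrt ∘ h.1.eigenvalues) *
      (star h.1.eigenvectorUnitary : Matrix (Fin p) (Fin p) ℂ))⁻¹ else 0

/-!
Put `ℵ = (𝔄⁻¹)ᴴ J 𝔄⁻¹`, so that `ℵ⁻¹ = 𝔄 J 𝔄ᴴ` has lower right block `ρ₊`. For a pair `(R, Q)`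
with `F = 𝔄₂₁ R + 𝔄₂₂ Q` invertible and `ψ = (𝔄₁₁ R + 𝔄₁₂ Q) F⁻¹`, one has
`[R; Q] = 𝔄⁻¹ [ψ; I] F`, hence `RᴴQ + QᴴR = Fᴴ ([ψ; I]ᴴ ℵ [ψ; I]) F`; conversely every `ψ` with
`[ψ; I]ᴴ ℵ [ψ; I] ≥ 0` comes from the nonsingular pair `[R; Q] = 𝔄⁻¹ [ψ; I]`. Completing the square
in `ψ` and using the Schur complement identity `ℵ₂₂ - ℵ₂₁ ℵ₁₁⁻¹ ℵ₁₂ = ρ₊⁻¹` gives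
`[ψ; I]ᴴ ℵ [ψ; I] = ρ₊⁻¹ - (ψ - c)ᴴ (-ℵ₁₁) (ψ - c)` with `c = (-ℵ₁₁)⁻¹ ℵ₁₂`, and this is `≥ 0`
exactly when `ψ - c = (-ℵ₁₁)^{-1/2} u ρ₊^{-1/2}` for a contraction `u`. Finally `φ = i ψ`.
-/

open scoped MatrixOrder

namespace Matrix

section BlockAlgebra

variable {m n α : Type*} [Fintype m] [Fintype n] [CommRing α]

lemma mul_fromRows_eq_fromRows_toBlocks (M : Matrix (m ⊕ n) (m ⊕ n) α) {l : Type*}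
    (X : Matrix m l α) (Y : Matrix n l α) :
    M * fromRows X Y =
      fromRows (M.toBlocks₁₁ * X + M.toBlocks₁₂ * Y) (M.toBlocks₂₁ * X + M.toBlocks₂₂ * Y) := by
  conv_lhs => rw [← fromBlocks_toBlocks M]
  exact fromBlocks_mul_fromRows ..

lemma conjTranspose_fromRows_mul_fromRows [StarRing α] {l : Type*} (X : Matrix m l α)
    (Y : Matrix n l α) : (fromRows X Y)ᴴ * fromRows X Y = Xᴴ * X + Yᴴ * Y := by
  rw [conjTranspose_fromRows_eq_fromCols_conjTranspose, fromCols_mul_fromRows]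

variable [DecidableEq n]

lemma conjTranspose_fromRows_mul_fromBlocks_swap_mul_fromRows [StarRing α] {l : Type*}
    (R Q : Matrix n l α) :
    (fromRows R Q)ᴴ * (fromBlocks 0 1 1 0 : Matrix (n ⊕ n) (n ⊕ n) α) * fromRows R Q =
      Rᴴ * Q + Qᴴ * R := by
  rw [conjTranspose_fromRows_eq_fromCols_conjTranspose, fromCols_mul_fromBlocks,
    fromCols_mul_fromRows]
  simp [add_comm]

variable [DecidableEq m]

theorem toBlocks₂₂_sub_mul_inv_mul_eq_inv {N M : Matrix (m ⊕ n) (m ⊕ n) α} (hNM : N * M = 1)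
    (h₁₁ : IsUnit N.toBlocks₁₁) :
    N.toBlocks₂₂ - N.toBlocks₂₁ * N.toBlocks₁₁⁻¹ * N.toBlocks₁₂ = M.toBlocks₂₂⁻¹ := by
  rw [← fromBlocks_toBlocks N, ← fromBlocks_toBlocks M, fromBlocks_multiply, ← fromBlocks_one,
    fromBlocks_inj] at hNM
  obtain ⟨-, h₁₂, -, h₂₂⟩ := hNM
  have hM₁₂ : M.toBlocks₁₂ = -(N.toBlocks₁₁⁻¹ * N.toBlocks₁₂ * M.toBlocks₂₂) := by
    have := congrArg (N.toBlocks₁₁⁻¹ * ·) h₁₂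
    simpa [Matrix.mul_add, ← Matrix.mul_assoc, nonsing_inv_mul _ ((isUnit_iff_isUnit_det _).mp h₁₁),
      eq_neg_iff_add_eq_zero] using this
  refine (inv_eq_left_inv ?_).symm
  rw [← h₂₂, hM₁₂]
  simp only [Matrix.sub_mul, Matrix.mul_neg, Matrix.mul_assoc]
  abel

-- Without the ascriptions on `1`, `*` would elaborate as `CStarMatrix` multiplication.
theorem conjTranspose_fromRows_one_mul_fromBlocks_mul_fromRows_one [StarRing α]
    {A : Matrix m m α} (hA : A.IsHermitian) (hAu : IsUnit A) (B : Matrix m n α)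
    (D : Matrix n n α) (ψ : Matrix m n α) :
    (fromRows ψ (1 : Matrix n n α))ᴴ * fromBlocks (-A) B Bᴴ D * fromRows ψ (1 : Matrix n n α) =
      D + Bᴴ * A⁻¹ * B - (ψ - A⁻¹ * B)ᴴ * A * (ψ - A⁻¹ * B) := by
  have hdet : IsUnit A.det := (isUnit_iff_isUnit_det _).mp hAu
  rw [conjTranspose_fromRows_eq_fromCols_conjTranspose, fromCols_mul_fromBlocks,
    fromCols_mul_fromRows, conjTranspose_sub, conjTranspose_mul, hA.inv.eq]
  simp only [conjTranspose_one, Matrix.one_mul, Matrix.mul_one, Matrix.sub_mul, Matrix.mul_sub,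
    Matrix.add_mul, Matrix.neg_mul, Matrix.mul_neg]
  simp only [← Matrix.mul_assoc, nonsing_inv_mul_cancel_right A _ hdet,
    mul_nonsing_inv_cancel_right A _ hdet]
  abel

end BlockAlgebra

lemma conjTranspose_smul_mul_smul {m n α : Type*} [Fintype m] [CommRing α] [StarRing α] {ζ : α}
    (hζ : star ζ * ζ = 1) (u : Matrix m n α) : (ζ • u)ᴴ * (ζ • u) = uᴴ * u := by
  rw [conjTranspose_smul, Matrix.smul_mul, Matrix.mul_smul, smul_smul, hζ, one_smul]

theorem posSemidef_inv_sub_iff_exists_contraction {n α : Type*} [Fintype n] [DecidableEq n]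
    [CommRing α] [PartialOrder α] [StarRing α] {S T : Matrix n n α} (hS : IsUnit S)
    (hT : IsUnit T) (d : Matrix n n α) :
    ((T * Tᴴ)⁻¹ - dᴴ * (Sᴴ * S) * d).PosSemidef ↔
      ∃ u, (1 - uᴴ * u).PosSemidef ∧ d = S⁻¹ * u * T⁻¹ := by
  have hSdet : IsUnit S.det := (isUnit_iff_isUnit_det _).mp hS
  have hconj : ∀ u, (T * Tᴴ)⁻¹ - (S⁻¹ * u * T⁻¹)ᴴ * (Sᴴ * S) * (S⁻¹ * u * T⁻¹) =
      star T⁻¹ * (1 - uᴴ * u) * T⁻¹ := fun u => by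
    rw [Matrix.mul_inv_rev, ← conjTranspose_nonsing_inv, star_eq_conjTranspose]
    simp only [conjTranspose_mul, conjTranspose_nonsing_inv, Matrix.mul_sub, Matrix.sub_mul,
      Matrix.mul_one, Matrix.mul_assoc]
    rw [mul_nonsing_inv_cancel_left _ _ hSdet,
      nonsing_inv_mul_cancel_left _ _ ((isUnit_iff_isUnit_det Sᴴ).mp hS.star)]
  constructor
  · intro h
    have hd : d = S⁻¹ * (S * d * T) * T⁻¹ := by
      rw [← Matrix.mul_assoc, nonsing_inv_mul_cancel_left _ _ hSdet,
        mul_nonsing_inv_cancel_right _ _ ((isUnit_iff_isUnit_det _).mp hT)]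
    refine ⟨S * d * T, ?_, hd⟩
    rwa [hd, hconj, IsUnit.posSemidef_star_left_conjugate_iff (isUnit_nonsing_inv_iff.mpr hT)] at h
  · rintro ⟨u, hu, rfl⟩
    rw [hconj]
    exact hu.conjTranspose_mul_mul_same _

lemma conjTranspose_sqrt {n 𝕜 : Type*} [Fintype n] [DecidableEq n] [RCLike 𝕜]
    (X : Matrix n n 𝕜) : (CFC.sqrt X)ᴴ = CFC.sqrt X :=
  (CFC.sqrt_nonneg X).isSelfAdjoint.star_eq

end Matrix

section Frame

variable {n α : Type*} [Fintype n] [DecidableEq n] [CommRing α] [StarRing α]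
  (𝔄 : Matrix (n ⊕ n) (n ⊕ n) α)

def aleph : Matrix (n ⊕ n) (n ⊕ n) α := (𝔄⁻¹)ᴴ * fromBlocks 0 1 1 0 * 𝔄⁻¹

def rhoPlus : Matrix n n α :=
  𝔄.toBlocks₂₁ * (𝔄.toBlocks₂₂)ᴴ + 𝔄.toBlocks₂₂ * (𝔄.toBlocks₂₁)ᴴ

lemma isHermitian_aleph : (aleph 𝔄).IsHermitian :=
  isHermitian_conjTranspose_mul_mul _ <|
    .fromBlocks isHermitian_zero (by simp) isHermitian_zero

lemma toBlocks₂₂_mul_fromBlocks_mul_conjTranspose :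
    (𝔄 * fromBlocks 0 1 1 0 * 𝔄ᴴ).toBlocks₂₂ = rhoPlus 𝔄 := by
  conv_lhs => rw [← fromBlocks_toBlocks 𝔄]
  simp [fromBlocks_conjTranspose, fromBlocks_multiply, rhoPlus, add_comm]

variable {𝔄}

lemma aleph_mul_eq_one (h𝔄 : IsUnit 𝔄) : aleph 𝔄 * (𝔄 * fromBlocks 0 1 1 0 * 𝔄ᴴ) = 1 := by
  have hJJ : (fromBlocks 0 1 1 0 : Matrix (n ⊕ n) (n ⊕ n) α) * fromBlocks 0 1 1 0 = 1 := by
    simp [fromBlocks_multiply, fromBlocks_one]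
  have hdet : IsUnit 𝔄.det := (isUnit_iff_isUnit_det _).mp h𝔄
  simp only [aleph, Matrix.mul_assoc, nonsing_inv_mul_cancel_left _ _ hdet]
  rw [← Matrix.mul_assoc (fromBlocks 0 1 1 0), hJJ, Matrix.one_mul, ← conjTranspose_mul,
    mul_nonsing_inv _ hdet, conjTranspose_one]

theorem conjTranspose_fromRows_one_mul_aleph_mul_fromRows_one (h𝔄 : IsUnit 𝔄)
    (hℵ : IsUnit (aleph 𝔄).toBlocks₁₁) (ψ : Matrix n n α) :
    (fromRows ψ (1 : Matrix n n α))ᴴ * aleph 𝔄 * fromRows ψ (1 : Matrix n n α) =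
      (rhoPlus 𝔄)⁻¹ - (ψ - (-(aleph 𝔄).toBlocks₁₁)⁻¹ * (aleph 𝔄).toBlocks₁₂)ᴴ *
        (-(aleph 𝔄).toBlocks₁₁) * (ψ - (-(aleph 𝔄).toBlocks₁₁)⁻¹ * (aleph 𝔄).toBlocks₁₂) := by
  set N := aleph 𝔄
  have hH : N.IsHermitian := isHermitian_aleph 𝔄
  rw [← fromBlocks_toBlocks N, isHermitian_fromBlocks_iff] at hH
  obtain ⟨h₁₁, h₁₂, -, -⟩ := hH
  have hN : N = fromBlocks (-(-N.toBlocks₁₁)) N.toBlocks₁₂ (N.toBlocks₁₂)ᴴ N.toBlocks₂₂ := by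
    rw [neg_neg, h₁₂, fromBlocks_toBlocks]
  have hneg : (-N.toBlocks₁₁)⁻¹ = -N.toBlocks₁₁⁻¹ := inv_eq_left_inv <| by
    rw [neg_mul_neg, nonsing_inv_mul _ ((isUnit_iff_isUnit_det _).mp hℵ)]
  have hSchur := toBlocks₂₂_sub_mul_inv_mul_eq_inv (aleph_mul_eq_one h𝔄) hℵ
  rw [toBlocks₂₂_mul_fromBlocks_mul_conjTranspose, ← h₁₂] at hSchur
  conv_lhs => rw [hN]
  rw [conjTranspose_fromRows_one_mul_fromBlocks_mul_fromRows_one h₁₁.neg hℵ.neg, hneg, ← hSchur,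
    Matrix.mul_neg, Matrix.neg_mul, ← sub_eq_add_neg]

theorem exists_pair_iff_posSemidef [PartialOrder α] [StarOrderedRing α] [NoZeroDivisors α]
    (h𝔄 : IsUnit 𝔄) (ψ : Matrix n n α) :
    (∃ R Q : Matrix n n α,
        (Rᴴ * R + Qᴴ * Q).PosDef ∧ (Rᴴ * Q + Qᴴ * R).PosSemidef ∧
        IsUnit (𝔄.toBlocks₂₁ * R + 𝔄.toBlocks₂₂ * Q) ∧
        ψ = (𝔄.toBlocks₁₁ * R + 𝔄.toBlocks₁₂ * Q) * (𝔄.toBlocks₂₁ * R + 𝔄.toBlocks₂₂ * Q)⁻¹) ↔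
      ((fromRows ψ (1 : Matrix n n α))ᴴ * aleph 𝔄 * fromRows ψ (1 : Matrix n n α)).PosSemidef := by
  have hdet : IsUnit 𝔄.det := (isUnit_iff_isUnit_det _).mp h𝔄
  set Z := fromRows ψ (1 : Matrix n n α)
  have hform : ∀ R Q F : Matrix n n α, fromRows R Q = 𝔄⁻¹ * (Z * F) →
      Rᴴ * Q + Qᴴ * R = star F * (Zᴴ * aleph 𝔄 * Z) * F := by
    intro R Q F hRQ
    rw [← conjTranspose_fromRows_mul_fromBlocks_swap_mul_fromRows, hRQ, aleph]
    simp only [conjTranspose_mul, star_eq_conjTranspose, Matrix.mul_assoc]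
  constructor
  · rintro ⟨R, Q, -, hJ, hF, rfl⟩
    set F := 𝔄.toBlocks₂₁ * R + 𝔄.toBlocks₂₂ * Q
    have hRQ : fromRows R Q = 𝔄⁻¹ * (Z * F) := by
      rw [fromRows_mul, Matrix.mul_assoc, nonsing_inv_mul _ ((isUnit_iff_isUnit_det _).mp hF),
        Matrix.mul_one, Matrix.one_mul, ← mul_fromRows_eq_fromRows_toBlocks,
        nonsing_inv_mul_cancel_left _ _ hdet]
    rwa [hform R Q F hRQ, IsUnit.posSemidef_star_left_conjugate_iff hF] at hJ
  · intro h
    set X := 𝔄⁻¹ * Z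
    have hAX : 𝔄 * fromRows X.toRows₁ X.toRows₂ = Z := by
      rw [fromRows_toRows, mul_nonsing_inv_cancel_left _ _ hdet]
    rw [mul_fromRows_eq_fromRows_toBlocks] at hAX
    obtain ⟨hP, hF⟩ := fromRows_inj hAX
    refine ⟨X.toRows₁, X.toRows₂, ?_, ?_, ?_, ?_⟩
    · rw [← conjTranspose_fromRows_mul_fromRows, fromRows_toRows]
      have hZ : Function.Injective Z.mulVec := fun v w hvw => by
        simpa [Z, fromRows_mulVec] using congrArg (· ∘ Sum.inr) hvw
      have hXZ : X.mulVec = (𝔄⁻¹).mulVec ∘ Z.mulVec := funext fun v => (mulVec_mulVec _ _ _).symm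
      refine PosDef.conjTranspose_mul_self _ ?_
      rw [hXZ]
      exact (mulVec_injective_of_isUnit (isUnit_nonsing_inv_iff.mpr h𝔄)).comp hZ
    · rwa [hform _ _ 1 (by rw [fromRows_toRows, Matrix.mul_one]), star_one, Matrix.one_mul,
        Matrix.mul_one]
    · rw [hF]
      exact isUnit_one
    · rw [hP, hF, inv_one, Matrix.mul_one]

end Frame

section InvSqrt

variable {p : ℕ}

lemma invSqrt_eq_inv_sqrt {X : Matrix (Fin p) (Fin p) ℂ} (hX : X.PosSemidef) :
    invSqrt X = (CFC.sqrt X)⁻¹ := by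
  rw [invSqrt, dif_pos hX, CFC.sqrt_eq_cfc, cfc_nnreal_eq_real _ X, hX.1.cfc_eq,
    IsHermitian.cfc, Unitary.conjStarAlgAut_apply]
  congr 4
  funext i
  simp [Real.coe_sqrt, Real.coe_toNNReal', hX.eigenvalues_nonneg i]

theorem posSemidef_inv_sub_iff_exists_invSqrt {A ρ : Matrix (Fin p) (Fin p) ℂ} (hA : A.PosDef)
    (hρ : ρ.PosDef) (d : Matrix (Fin p) (Fin p) ℂ) :
    (ρ⁻¹ - dᴴ * A * d).PosSemidef ↔
      ∃ u, (1 - uᴴ * u).PosSemidef ∧ d = invSqrt A * u * invSqrt ρ := by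
  rw [invSqrt_eq_inv_sqrt hA.posSemidef, invSqrt_eq_inv_sqrt hρ.posSemidef,
    ← posSemidef_inv_sub_iff_exists_contraction
      ((CFC.isUnit_sqrt_iff A hA.posSemidef.nonneg).mpr hA.isUnit)
      ((CFC.isUnit_sqrt_iff ρ hρ.posSemidef.nonneg).mpr hρ.isUnit),
    conjTranspose_sqrt, conjTranspose_sqrt, CFC.sqrt_mul_sqrt_self A hA.posSemidef.nonneg,
    CFC.sqrt_mul_sqrt_self ρ hρ.posSemidef.nonneg]

end InvSqrt

theorem matrix_ball_description_general
    {p : ℕ}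
    (𝔄 : Matrix (Fin p ⊕ Fin p) (Fin p ⊕ Fin p) ℂ)
    (h𝔄 : IsUnit 𝔄)
    (hρ : (𝔄.toBlocks₂₁ * (𝔄.toBlocks₂₂)ᴴ + 𝔄.toBlocks₂₂ * (𝔄.toBlocks₂₁)ᴴ).PosDef)
    (hℵ : (-((𝔄⁻¹)ᴴ * Matrix.fromBlocks 0 1 1 0 * 𝔄⁻¹).toBlocks₁₁).PosDef)
    (φ : Matrix (Fin p) (Fin p) ℂ) :
    (∃ R Q : Matrix (Fin p) (Fin p) ℂ,
        (Rᴴ * R + Qᴴ * Q).PosDef ∧ (Rᴴ * Q + Qᴴ * R).PosSemidef ∧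
        IsUnit (𝔄.toBlocks₂₁ * R + 𝔄.toBlocks₂₂ * Q) ∧
        φ = Complex.I • ((𝔄.toBlocks₁₁ * R + 𝔄.toBlocks₁₂ * Q) *
          (𝔄.toBlocks₂₁ * R + 𝔄.toBlocks₂₂ * Q)⁻¹)) ↔
    (∃ u : Matrix (Fin p) (Fin p) ℂ,
        ((1 : Matrix (Fin p) (Fin p) ℂ) - uᴴ * u).PosSemidef ∧
        φ = Complex.I •
            ((-((𝔄⁻¹)ᴴ * Matrix.fromBlocks 0 1 1 0 * 𝔄⁻¹).toBlocks₁₁)⁻¹ *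
              ((𝔄⁻¹)ᴴ * Matrix.fromBlocks 0 1 1 0 * 𝔄⁻¹).toBlocks₁₂) -
          invSqrt (-((𝔄⁻¹)ᴴ * Matrix.fromBlocks 0 1 1 0 * 𝔄⁻¹).toBlocks₁₁) * u *
            invSqrt (𝔄.toBlocks₂₁ * (𝔄.toBlocks₂₂)ᴴ + 𝔄.toBlocks₂₂ * (𝔄.toBlocks₂₁)ᴴ)) := by
  rw [show (𝔄⁻¹)ᴴ * fromBlocks 0 1 1 0 * 𝔄⁻¹ = aleph 𝔄 from rfl] at hℵ ⊢
  rw [show 𝔄.toBlocks₂₁ * (𝔄.toBlocks₂₂)ᴴ + 𝔄.toBlocks₂₂ * (𝔄.toBlocks₂₁)ᴴ = rhoPlus 𝔄 from rfl]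
    at hρ ⊢
  set c := (-(aleph 𝔄).toBlocks₁₁)⁻¹ * (aleph 𝔄).toBlocks₁₂
  have hball : ∀ ψ, ((fromRows ψ (1 : Matrix (Fin p) (Fin p) ℂ))ᴴ * aleph 𝔄 *
      fromRows ψ (1 : Matrix (Fin p) (Fin p) ℂ)).PosSemidef ↔
      ∃ u, (1 - uᴴ * u).PosSemidef ∧
        ψ - c = invSqrt (-(aleph 𝔄).toBlocks₁₁) * u * invSqrt (rhoPlus 𝔄) := fun ψ => by
    rw [conjTranspose_fromRows_one_mul_aleph_mul_fromRows_one h𝔄 (by simpa using hℵ.isUnit.neg)]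
    exact posSemidef_inv_sub_iff_exists_invSqrt hℵ hρ _
  constructor
  · rintro ⟨R, Q, hRQ, hJ, hF, rfl⟩
    obtain ⟨u, hu, hψ⟩ :=
      (hball _).mp ((exists_pair_iff_posSemidef h𝔄 _).mp ⟨R, Q, hRQ, hJ, hF, rfl⟩)
    refine ⟨-Complex.I • u, ?_, ?_⟩
    · rwa [conjTranspose_smul_mul_smul (by simp)]
    · rw [Matrix.mul_smul, Matrix.smul_mul, ← hψ]
      module
  · rintro ⟨u, hu, rfl⟩
    obtain ⟨R, Q, hRQ, hJ, hF, hψ⟩ := (exists_pair_iff_posSemidef h𝔄 _).mpr <|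
      (hball (c + Complex.I • (invSqrt (-(aleph 𝔄).toBlocks₁₁) * u * invSqrt (rhoPlus 𝔄)))).mpr
        ⟨Complex.I • u, by rwa [conjTranspose_smul_mul_smul (by simp)], by
          rw [add_sub_cancel_left, Matrix.mul_smul, Matrix.smul_mul]⟩
    refine ⟨R, Q, hRQ, hJ, hF, ?_⟩
    rw [← hψ, smul_add, smul_smul, Complex.I_mul_I, neg_one_smul, sub_eq_add_neg]

/-- matrix ball description of the values of the linear fractional
transformations generated by a frame `𝔄` and nonsingular pairs with property-`J`. -/
theorem matrix_ball_description
    {p : ℕ} (hp : 1 ≤ p)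
    (𝔄 : Matrix (Fin p ⊕ Fin p) (Fin p ⊕ Fin p) ℂ)
    (h𝔄 : IsUnit 𝔄)
    (hρ : (𝔄.toBlocks₂₁ * (𝔄.toBlocks₂₂)ᴴ + 𝔄.toBlocks₂₂ * (𝔄.toBlocks₂₁)ᴴ).PosDef)
    (hℵ : (-((𝔄⁻¹)ᴴ * Matrix.fromBlocks 0 1 1 0 * 𝔄⁻¹).toBlocks₁₁).PosDef)
    (φ : Matrix (Fin p) (Fin p) ℂ) :
    (∃ R Q : Matrix (Fin p) (Fin p) ℂ,
        (Rᴴ * R + Qᴴ * Q).PosDef ∧ (Rᴴ * Q + Qᴴ * R).PosSemidef ∧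
        IsUnit (𝔄.toBlocks₂₁ * R + 𝔄.toBlocks₂₂ * Q) ∧
        φ = Complex.I • ((𝔄.toBlocks₁₁ * R + 𝔄.toBlocks₁₂ * Q) *
          (𝔄.toBlocks₂₁ * R + 𝔄.toBlocks₂₂ * Q)⁻¹)) ↔
    (∃ u : Matrix (Fin p) (Fin p) ℂ,
        ((1 : Matrix (Fin p) (Fin p) ℂ) - uᴴ * u).PosSemidef ∧
        φ = Complex.I •
            ((-((𝔄⁻¹)ᴴ * Matrix.fromBlocks 0 1 1 0 * 𝔄⁻¹).toBlocks₁₁)⁻¹ *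
              ((𝔄⁻¹)ᴴ * Matrix.fromBlocks 0 1 1 0 * 𝔄⁻¹).toBlocks₁₂) -
          invSqrt (-((𝔄⁻¹)ᴴ * Matrix.fromBlocks 0 1 1 0 * 𝔄⁻¹).toBlocks₁₁) * u *
            invSqrt (𝔄.toBlocks₂₁ * (𝔄.toBlocks₂₂)ᴴ + 𝔄.toBlocks₂₂ * (𝔄.toBlocks₂₁)ᴴ)) :=
  matrix_ball_description_general 𝔄 h𝔄 hρ hℵ φ

end
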